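/- arXiv:1703.02230 — 2 statements merged into one kernel-verified Lean document; each statement's English description precedes it below -/
import Mathlib

section
/- For every integer k, there exists a strongly connected digraph D with chromatic number greater than k that contains no 3-spindle and no (2+2)-bispindle. -/
universe u

section Defs
variable {V : Type u}

/-- `l` is a directed path from `x` to `y` in the digraph with arc relation `A`. -/
def DiPath (A : V → V → Prop) (x y : V) (l : List V) : Prop :=
  l.Chain' A ∧ l.Nodup ∧ l.head? = some x ∧ l.getLast? = some y

/-- The internal vertices of a path given as a list. -/
def internals (l : List V) : List V := l.tail.dropLast

/-- `(a,b)` is an arc of the directed cycle represented by the list `l`. -/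
def cycArc (l : List V) (a b : V) : Prop :=
  (a, b) ∈ l.zip l.tail ∨ (l.getLast? = some a ∧ l.head? = some b)

/-- `l` represents a directed cycle of the digraph with arc relation `A`;
its length (number of arcs = number of vertices) is `l.length`. -/
def DiCycle (A : V → V → Prop) (l : List V) : Prop :=
  l ≠ [] ∧ l.Chain' A ∧ l.Nodup ∧
    ∀ a b, l.getLast? = some a → l.head? = some b → A a b

/-- A digraph is strongly connected. -/
def StrongConn (A : V → V → Prop) : Prop := ∀ x y : V, ∃ l, DiPath A x y l

/-- The chromatic number of a digraph: that of its underlying undirected graph. -/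
noncomputable def dchrom (A : V → V → Prop) : ℕ∞ :=
  (SimpleGraph.fromRel A).chromaticNumber

/-- Two paths are internally disjoint. -/
def IntDisj (P Q : List V) : Prop :=
  (∀ v ∈ internals P, v ∉ internals Q) ∧ (∀ v ∈ internals Q, v ∉ internals P)

/-- `D` contains a subdivision of the bispindle `B(k1,k2;k3)`: vertices `x`, `y`
and three pairwise internally disjoint dipaths, two from `x` to `y` of lengths
at least `k1` and `k2`, and one from `y` to `x` of length at least `k3`. -/
def SubdivB (A : V → V → Prop) (k1 k2 k3 : ℕ) : Prop :=
  ∃ (x y : V) (P1 P2 P3 : List V),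
    DiPath A x y P1 ∧ DiPath A x y P2 ∧ DiPath A y x P3 ∧
    k1 + 1 ≤ P1.length ∧ k2 + 1 ≤ P2.length ∧ k3 + 1 ≤ P3.length ∧
    P1 ≠ P2 ∧ IntDisj P1 P2 ∧ IntDisj P1 P3 ∧ IntDisj P2 P3

/-- The length of the subpath of the cycle `l` from `a` to `b` (number of arcs). -/
def cycDist [DecidableEq V] (l : List V) (a b : V) : ℕ :=
  (l.rotate (l.idxOf a)).idxOf b

/-- The subpath (vertex list) of the cycle `l` from `a` to `b`. -/
def cycSub [DecidableEq V] (l : List V) (a b : V) : List V :=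
  (l.rotate (l.idxOf a)).take (cycDist l a b + 1)

/-- The intersection of the cycles `Ci` and `Cj` is the common directed subpath
from `a` to `b`, having at most `k` vertices. -/
def InterPath [DecidableEq V] (k : ℕ) (Ci Cj : List V) (a b : V) : Prop :=
  a ∈ Ci ∧ b ∈ Cj ∧ (∀ x, (x ∈ Ci ∧ x ∈ Cj) ↔ x ∈ cycSub Ci a b) ∧
  cycSub Ci a b = cycSub Cj a b ∧ (cycSub Ci a b).length ≤ k

/-- A `k`-suitable collection of directed cycles: all cycles have length at least `8k`
and any two distinct cycles intersect on a directed subpath of at most `k` vertices. -/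
def Suitable [DecidableEq V] (A : V → V → Prop) (k : ℕ) (𝒞 : Set (List V)) : Prop :=
  (∀ C ∈ 𝒞, DiCycle A C ∧ 8 * k ≤ C.length) ∧
  ∀ C ∈ 𝒞, ∀ C' ∈ 𝒞, C ≠ C' → (∃ x, x ∈ C ∧ x ∈ C') → ∃ a b, InterPath k C C' a b

/-- Adjacency in the intersection graph of a collection of cycles. -/
def interRel (𝒞 : Set (List V)) : List V → List V → Prop :=
  fun C C' => C ∈ 𝒞 ∧ C' ∈ 𝒞 ∧ ∃ x, x ∈ C ∧ x ∈ C'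

/-- `(a,b)` is an arc of the union of the cycles of `𝒞`. -/
def unionArc (𝒞 : Set (List V)) (a b : V) : Prop := ∃ C ∈ 𝒞, cycArc C a b

/-- A graph is 2-connected. -/
def TwoConnectedG {W : Type*} (G : SimpleGraph W) : Prop :=
  G.Connected ∧ ∀ w : W, (G.induce {u | u ≠ w}).Connected

end Defs

/-- A 3-spindle: three pairwise internally disjoint dipaths from `x` to `y`. -/
def Spindle3 {V : Type u} (A : V → V → Prop) : Prop :=
  ∃ (x y : V) (P1 P2 P3 : List V),
    DiPath A x y P1 ∧ DiPath A x y P2 ∧ DiPath A x y P3 ∧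
    2 ≤ P1.length ∧ 2 ≤ P2.length ∧ 2 ≤ P3.length ∧
    P1 ≠ P2 ∧ P1 ≠ P3 ∧ P2 ≠ P3 ∧
    IntDisj P1 P2 ∧ IntDisj P1 P3 ∧ IntDisj P2 P3

/-- A `(2+2)`-bispindle: two `(x,y)`-dipaths and two `(y,x)`-dipaths, all pairwise
internally disjoint. -/
def Bispindle22 {V : Type u} (A : V → V → Prop) : Prop :=
  ∃ (x y : V) (P1 P2 P3 P4 : List V),
    DiPath A x y P1 ∧ DiPath A x y P2 ∧ DiPath A y x P3 ∧ DiPath A y x P4 ∧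
    2 ≤ P1.length ∧ 2 ≤ P2.length ∧ 2 ≤ P3.length ∧ 2 ≤ P4.length ∧
    P1 ≠ P2 ∧ P3 ≠ P4 ∧
    IntDisj P1 P2 ∧ IntDisj P1 P3 ∧ IntDisj P1 P4 ∧
    IntDisj P2 P3 ∧ IntDisj P2 P4 ∧ IntDisj P3 P4


/-!
Start from a finite digraph `D₀` with chromatic number greater than `k` in which any two
internally disjoint dipaths with the same ends coincide: Tutte's construction, attaching a copy
of `D₀` to `|V(D₀)|` of `(k + 1)|V(D₀)|` new independent sinks in every possible way, produces
such digraphs for every `k` by induction. Make `D₀` strong by adding a directed cycle that every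
vertex `v` enters at `α v` and leaves at `β v`, all entries preceding a cycle vertex `r` and all
exits following it. A dipath between vertices of `D₀` that uses the cycle passes through `r`, so
of several internally disjoint such dipaths at most one uses the cycle, and any two of the others
coincide. A (bi)spindle with an end on the cycle is impossible as well: a cycle vertex has at most
two in- and two out-neighbours, and two of both only if it is an entry and an exit at once.
-/

variable {V W : Type*} {A : V → V → Prop} {B : W → W → Prop} {x y z : V} {P Q : List V}

namespace DiPath

theorem exists_eq_cons (h : DiPath A x y P) : ∃ t, P = x :: t := by
  obtain ⟨-, -, hx, -⟩ := h
  cases P with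
  | nil => simp at hx
  | cons a t => exact ⟨t, by simpa using hx⟩

theorem singleton (A : V → V → Prop) (x : V) : DiPath A x x [x] :=
  ⟨List.isChain_singleton _, List.nodup_singleton _, rfl, rfl⟩

theorem mem_internals_iff (h : DiPath A x y P) : z ∈ internals P ↔ z ∈ P ∧ z ≠ x ∧ z ≠ y := by
  obtain ⟨t, rfl⟩ := h.exists_eq_cons
  obtain ⟨-, hnd, -, hy⟩ := h
  rcases t.eq_nil_or_concat with rfl | ⟨L, b, rfl⟩
  · simp only [internals, List.tail_cons, List.dropLast_nil, List.not_mem_nil, false_iff]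
    grind
  · simp only [List.concat_eq_append, ← List.cons_append, List.getLast?_append,
      List.getLast?_singleton, Option.some_or, Option.some.injEq] at hy
    subst hy
    simp only [internals, List.tail_cons, List.concat_eq_append, List.dropLast_concat]
    simp only [List.concat_eq_append, List.nodup_cons, List.nodup_append] at hnd
    grind

theorem eq_singleton (h : DiPath A x x P) : P = [x] := by
  obtain ⟨t, rfl⟩ := h.exists_eq_cons
  obtain ⟨-, hnd, -, hx⟩ := h
  cases t with
  | nil => rfl
  | cons a t =>
    rw [List.getLast?_cons_cons, List.getLast?_eq_some_iff] at hx
    obtain ⟨L, hL⟩ := hx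
    simp [hL] at hnd

theorem two_le_length (h : DiPath A x y P) (hxy : x ≠ y) : 2 ≤ P.length := by
  obtain ⟨t, rfl⟩ := h.exists_eq_cons
  cases t with
  | nil => exact absurd (by simpa using h.2.2.2) hxy
  | cons => simp

theorem exists_eq_cons_cons (h : DiPath A x y P) (h2 : 2 ≤ P.length) :
    ∃ a t, P = x :: a :: t ∧ A x a := by
  obtain ⟨_ | ⟨a, t⟩, rfl⟩ := h.exists_eq_cons
  · simp at h2
  · exact ⟨a, t, rfl, (List.isChain_cons_cons.mp h.1).1⟩

theorem tail (h : DiPath A x y (x :: z :: P)) : DiPath A z y (z :: P) := by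
  obtain ⟨hc, hnd, -, hy⟩ := h
  exact ⟨(List.isChain_cons_cons.mp hc).2, (List.nodup_cons.mp hnd).2, rfl,
    by rwa [List.getLast?_cons_cons] at hy⟩

theorem cons (hxz : A x z) (h : DiPath A z y P) (hx : x ∉ P) : DiPath A x y (x :: P) := by
  obtain ⟨t, rfl⟩ := h.exists_eq_cons
  obtain ⟨hc, hnd, -, hy⟩ := h
  exact ⟨List.isChain_cons_cons.mpr ⟨hxz, hc⟩, List.nodup_cons.mpr ⟨hx, hnd⟩, rfl,
    by rwa [List.getLast?_cons_cons]⟩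

theorem suffix {L R : List V} (h : DiPath A x y (L ++ z :: R)) : DiPath A z y (z :: R) := by
  obtain ⟨hc, hnd, -, hy⟩ := h
  exact ⟨hc.right_of_append, hnd.of_append_right, rfl,
    by rwa [List.getLast?_append_of_ne_nil _ (List.cons_ne_nil _ _)] at hy⟩

theorem reverse (h : DiPath A x y P) : DiPath (flip A) y x P.reverse := by
  obtain ⟨hc, hnd, hx, hy⟩ := h
  exact ⟨List.isChain_reverse.mpr hc, List.nodup_reverse.mpr hnd,
    by rwa [List.head?_reverse], by rwa [List.getLast?_reverse]⟩

theorem exists_eq_append_singleton (h : DiPath A x y P) (hxy : x ≠ y) :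
    ∃ p P', P = P' ++ [y] ∧ DiPath A x p P' ∧ A p y := by
  obtain ⟨p, t, ht, hyp⟩ :=
    h.reverse.exists_eq_cons_cons (by simpa using h.two_le_length hxy)
  have hpt : DiPath (flip A) p x (p :: t) := ht ▸ h.reverse |>.tail
  refine ⟨p, (p :: t).reverse, ?_, hpt.reverse, hyp⟩
  rw [← List.reverse_reverse P, ht]
  simp

theorem of_map {g : W → V} (hg : g.Injective) (harc : ∀ u v, A (g u) (g v) → B u v)
    {x y : W} {P : List W} (h : DiPath A (g x) (g y) (P.map g)) : DiPath B x y P := by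
  obtain ⟨hc, hnd, hx, hy⟩ := h
  refine ⟨List.isChain_of_isChain_map g harc hc, hnd.of_map g, ?_, ?_⟩
  · rw [List.head?_map] at hx
    exact Option.map_injective hg hx
  · rw [List.getLast?_map] at hy
    exact Option.map_injective hg hy

theorem forall_mem_of_inClosed {S : Set V} (hS : ∀ z w, A z w → w ∈ S → z ∈ S)
    (h : DiPath A x y P) (hy : y ∈ S) : ∀ z ∈ P, z ∈ S :=
  List.IsChain.backwards_induction (· ∈ S) P h.1 (fun _ _ => hS _ _) fun hne => by
    rwa [Option.some_inj.mp ((List.getLast?_eq_some_getLast hne).symm.trans h.2.2.2)]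

theorem eq_of_intDisj (hP : DiPath A x y (x :: z :: P)) (hQ : DiPath A x y (x :: z :: Q))
    (hd : IntDisj (x :: z :: P) (x :: z :: Q)) : P = Q := by
  by_cases hzy : z = y
  · subst hzy
    have hP' := hP.tail.eq_singleton
    have hQ' := hQ.tail.eq_singleton
    simp_all
  · have hzx : z ≠ x := by
      rintro rfl; exact (List.nodup_cons.mp hP.2.1).1 (List.mem_cons_self ..)
    exact absurd ((hQ.mem_internals_iff).mpr ⟨by simp, hzx, hzy⟩)
      (hd.1 z ((hP.mem_internals_iff).mpr ⟨by simp, hzx, hzy⟩))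

end DiPath

theorem exists_diPath_of_reflTransGen (h : Relation.ReflTransGen A x y) : ∃ P, DiPath A x y P := by
  induction h using Relation.ReflTransGen.head_induction_on with
  | refl => exact ⟨[y], DiPath.singleton A y⟩
  | @head a _ hac _ ih =>
    obtain ⟨P, hP⟩ := ih
    by_cases ha : a ∈ P
    · obtain ⟨L, R, rfl⟩ := List.append_of_mem ha
      exact ⟨_, hP.suffix⟩
    · exact ⟨_, hP.cons hac ha⟩

theorem internals_reverse (P : List V) : internals P.reverse = (internals P).reverse := by
  simp only [internals, List.tail_reverse, List.dropLast_reverse, List.tail_dropLast]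

theorem internals_map (g : V → W) (P : List V) : internals (P.map g) = (internals P).map g := by
  simp only [internals, List.map_tail, List.map_dropLast]

theorem internals_sublist_internals_append (L R : List V) :
    (internals L).Sublist (internals (L ++ R)) := by
  simp only [internals, ← List.tail_dropLast, List.dropLast_append]
  split_ifs
  · exact List.Sublist.refl _
  · exact (List.dropLast_sublist _).trans (List.sublist_append_left _ _) |>.tail

theorem IntDisj.reverse (h : IntDisj P Q) : IntDisj P.reverse Q.reverse := by
  simpa only [IntDisj, internals_reverse, List.mem_reverse] using h

theorem IntDisj.of_map {g : V → W} (h : IntDisj (P.map g) (Q.map g)) : IntDisj P Q := by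
  simp only [IntDisj, internals_map, List.mem_map] at h
  exact ⟨fun v hv hv' => h.1 _ ⟨v, hv, rfl⟩ ⟨v, hv', rfl⟩,
    fun v hv hv' => h.2 _ ⟨v, hv, rfl⟩ ⟨v, hv', rfl⟩⟩

theorem IntDisj.of_append {L L' R R' : List V} (h : IntDisj (L ++ R) (L' ++ R')) : IntDisj L L' :=
  ⟨fun v hv hv' => h.1 v ((internals_sublist_internals_append L R).subset hv)
      ((internals_sublist_internals_append L' R').subset hv'),
    fun v hv hv' => h.2 v ((internals_sublist_internals_append L' R').subset hv)
      ((internals_sublist_internals_append L R).subset hv')⟩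

def TwoSpindleFree (A : V → V → Prop) : Prop :=
  ∀ ⦃x y : V⦄ ⦃P Q : List V⦄, DiPath A x y P → DiPath A x y Q → IntDisj P Q → P = Q

theorem TwoSpindleFree.eq_of_forall_mem_range (hB : TwoSpindleFree B) {g : W → V}
    (hg : g.Injective) (harc : ∀ u v, A (g u) (g v) → B u v) (hP : DiPath A x y P)
    (hQ : DiPath A x y Q) (hd : IntDisj P Q) (hPg : ∀ z ∈ P, z ∈ Set.range g)
    (hQg : ∀ z ∈ Q, z ∈ Set.range g) : P = Q := by
  obtain ⟨P₀, rfl⟩ : P ∈ Set.range (List.map g) := by rwa [Set.range_list_map]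
  obtain ⟨Q₀, rfl⟩ : Q ∈ Set.range (List.map g) := by rwa [Set.range_list_map]
  obtain ⟨x₀, rfl⟩ := hPg x (List.mem_of_head? hP.2.2.1)
  obtain ⟨y₀, rfl⟩ := hPg y (List.mem_of_getLast? hP.2.2.2)
  rw [hB (hP.of_map hg harc) (hQ.of_map hg harc) hd.of_map]

namespace DiPath

theorem eq_of_intDisj_of_unique_out {a : V} (hout : ∀ z, A x z → z = a)
    (hP : DiPath A x y P) (hQ : DiPath A x y Q) (hP2 : 2 ≤ P.length) (hQ2 : 2 ≤ Q.length)
    (hd : IntDisj P Q) : P = Q := by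
  obtain ⟨s, P', rfl, hs⟩ := hP.exists_eq_cons_cons hP2
  obtain ⟨t, Q', rfl, ht⟩ := hQ.exists_eq_cons_cons hQ2
  obtain rfl := hout s hs
  obtain rfl := hout t ht
  rw [eq_of_intDisj hP hQ hd]

theorem eq_or_eq_of_intDisj_of_two_out {a b : V} (hout : ∀ z, A x z → z = a ∨ z = b)
    {P₁ P₂ P₃ : List V} (h₁ : DiPath A x y P₁) (h₂ : DiPath A x y P₂) (h₃ : DiPath A x y P₃)
    (l₁ : 2 ≤ P₁.length) (l₂ : 2 ≤ P₂.length) (l₃ : 2 ≤ P₃.length)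
    (d₁₂ : IntDisj P₁ P₂) (d₁₃ : IntDisj P₁ P₃) (d₂₃ : IntDisj P₂ P₃) :
    P₁ = P₂ ∨ P₁ = P₃ ∨ P₂ = P₃ := by
  obtain ⟨s₁, P₁, rfl, hs₁⟩ := h₁.exists_eq_cons_cons l₁
  obtain ⟨s₂, P₂, rfl, hs₂⟩ := h₂.exists_eq_cons_cons l₂
  obtain ⟨s₃, P₃, rfl, hs₃⟩ := h₃.exists_eq_cons_cons l₃
  rcases hout s₁ hs₁ with rfl | rfl <;> rcases hout s₂ hs₂ with rfl | rfl <;>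
    rcases hout s₃ hs₃ with rfl | rfl <;>
    first
    | exact .inl (by rw [eq_of_intDisj h₁ h₂ d₁₂])
    | exact .inr (.inl (by rw [eq_of_intDisj h₁ h₃ d₁₃]))
    | exact .inr (.inr (by rw [eq_of_intDisj h₂ h₃ d₂₃]))

theorem eq_of_intDisj_of_unique_in {a : V} (hin : ∀ z, A z y → z = a)
    (hP : DiPath A x y P) (hQ : DiPath A x y Q) (hP2 : 2 ≤ P.length) (hQ2 : 2 ≤ Q.length)
    (hd : IntDisj P Q) : P = Q :=
  List.reverse_injective <| eq_of_intDisj_of_unique_out (A := flip A) hin hP.reverse hQ.reverse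
    (by simpa using hP2) (by simpa using hQ2) hd.reverse

theorem eq_or_eq_of_intDisj_of_two_in {a b : V} (hin : ∀ z, A z y → z = a ∨ z = b)
    {P₁ P₂ P₃ : List V} (h₁ : DiPath A x y P₁) (h₂ : DiPath A x y P₂) (h₃ : DiPath A x y P₃)
    (l₁ : 2 ≤ P₁.length) (l₂ : 2 ≤ P₂.length) (l₃ : 2 ≤ P₃.length)
    (d₁₂ : IntDisj P₁ P₂) (d₁₃ : IntDisj P₁ P₃) (d₂₃ : IntDisj P₂ P₃) :
    P₁ = P₂ ∨ P₁ = P₃ ∨ P₂ = P₃ := by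
  simpa only [List.reverse_inj] using eq_or_eq_of_intDisj_of_two_out (A := flip A) hin
    h₁.reverse h₂.reverse h₃.reverse (by simpa using l₁) (by simpa using l₂) (by simpa using l₃)
    d₁₂.reverse d₁₃.reverse d₂₃.reverse

end DiPath

def fromRelHom {g : V → W} (hg : g.Injective) (harc : ∀ u v, A u v → B (g u) (g v)) :
    SimpleGraph.fromRel A →g SimpleGraph.fromRel B where
  toFun := g
  map_rel' {u v} h := by
    rw [SimpleGraph.fromRel_adj] at h ⊢
    exact ⟨hg.ne h.1, h.2.imp (harc u v) (harc v u)⟩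

section TutteStep

open Sum

variable (A) in
/-- Tutte's construction (after Blanche Descartes), with one copy of `A` per injection of its
vertices into the `N` new vertices instead of one per `|V|`-subset. -/
def tutteStep (N : ℕ) : Fin N ⊕ ((V ↪ Fin N) × V) → Fin N ⊕ ((V ↪ Fin N) × V) → Prop
  | inr (f, u), inr (g, v) => f = g ∧ A u v
  | inr (f, u), inl s => f u = s
  | _, _ => False

theorem injective_inr_prodMk {N : ℕ} (f : V ↪ Fin N) :
    (fun u => (inr (f, u) : Fin N ⊕ ((V ↪ Fin N) × V))).Injective :=
  inr_injective.comp (Prod.mk_right_injective f)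

theorem twoSpindleFree_tutteStep (hA : TwoSpindleFree A) (N : ℕ) :
    TwoSpindleFree (tutteStep A N) := by
  have inClosed (f : V ↪ Fin N) (z w) (hzw : tutteStep A N z w)
      (hw : w ∈ Set.range fun u => inr (f, u)) : z ∈ Set.range fun u => inr (f, u) := by
    obtain ⟨v, rfl⟩ := hw
    rcases z with _ | ⟨g, u⟩
    · exact hzw.elim
    · exact ⟨u, by rw [hzw.1]⟩
  have in_copy {f v x P} (h : DiPath (tutteStep A N) x (inr (f, v)) P) :=
    h.forall_mem_of_inClosed (inClosed f) ⟨v, rfl⟩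
  have eq_of_copy {f v x P Q} (hP : DiPath (tutteStep A N) x (inr (f, v)) P)
      (hQ : DiPath (tutteStep A N) x (inr (f, v)) Q) (hd : IntDisj P Q) : P = Q :=
    hA.eq_of_forall_mem_range (injective_inr_prodMk f) (fun _ _ h => h.2) hP hQ hd
      (in_copy hP) (in_copy hQ)
  intro x y P Q hP hQ hd
  rcases y with s | ⟨f, v⟩
  · by_cases hxs : x = inl s
    · subst hxs
      rw [hP.eq_singleton, hQ.eq_singleton]
    obtain ⟨_ | ⟨f, u⟩, P', rfl, hP', hfu⟩ := hP.exists_eq_append_singleton hxs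
    · exact hfu.elim
    obtain ⟨_ | ⟨g, u'⟩, Q', rfl, hQ', hgu'⟩ := hQ.exists_eq_append_singleton hxs
    · exact hgu'.elim
    obtain ⟨a, rfl⟩ := in_copy hP' x (List.mem_of_head? hP'.2.2.1)
    obtain ⟨b, hb⟩ := in_copy hQ' _ (List.mem_of_head? hQ'.2.2.1)
    obtain ⟨rfl, -⟩ : f = g ∧ a = b := by simpa using hb.symm
    obtain rfl : u = u' := f.injective (hfu.trans hgu'.symm)
    rw [eq_of_copy hP' hQ' hd.of_append]
  · exact eq_of_copy hP hQ hd

theorem not_colorable_tutteStep [Fintype V] {k N : ℕ}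
    (hA : ¬(SimpleGraph.fromRel A).Colorable k) (hN : (k + 1) * Fintype.card V ≤ N) :
    ¬(SimpleGraph.fromRel (tutteStep A N)).Colorable (k + 1) := by
  rintro ⟨C⟩
  -- some colour `col` is used on `|V|` new vertices; the copy of `A` over them avoids `col`
  obtain ⟨col, hcol⟩ := Fintype.exists_le_card_fiber_of_mul_le_card
    (fun s : Fin N => C (inl s)) (n := Fintype.card V) (by simpa using hN)
  obtain ⟨f⟩ : Nonempty (V ↪ {s : Fin N // C (inl s) = col}) :=
    Function.Embedding.nonempty_of_card_le (by rwa [Fintype.card_subtype])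
  let f' := f.trans (Function.Embedding.subtype _)
  let φ := fromRelHom (B := tutteStep A N) (injective_inr_prodMk f') fun _ _ h => ⟨rfl, h⟩
  have hφ (u : V) : C (φ u) ≠ col := fun h => by
    refine C.valid (v := φ u) (w := inl (f' u)) ?_ (h.trans (f u).2.symm)
    rw [SimpleGraph.fromRel_adj]
    exact ⟨by simp [φ, fromRelHom], .inl rfl⟩
  have hcard : Fintype.card {c // c ≠ col} = k := by simp
  exact hA (hcard ▸ (SimpleGraph.Coloring.mk (fun u => ⟨C (φ u), hφ u⟩)
    fun h => C.valid (φ.map_adj h) ∘ congrArg Subtype.val).colorable)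

end TutteStep

theorem exists_twoSpindleFree_not_colorable (k : ℕ) :
    ∃ (V : Type) (_ : Fintype V) (A : V → V → Prop),
      TwoSpindleFree A ∧ ¬(SimpleGraph.fromRel A).Colorable k := by
  induction k with
  | zero =>
    refine ⟨Unit, inferInstance, fun _ _ => False, fun x y P Q hP hQ _ => ?_, ?_⟩
    · obtain rfl : x = y := Subsingleton.elim x y
      rw [hP.eq_singleton, hQ.eq_singleton]
    · simp [SimpleGraph.colorable_zero_iff]
  | succ k ih =>
    obtain ⟨V, _, A, hA, hk⟩ := ih
    exact ⟨_, inferInstance, _, twoSpindleFree_tutteStep hA _, not_colorable_tutteStep hk le_rfl⟩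

section CycleGlue

open Sum Relation

variable {V₀ : Type*} {A₀ : V₀ → V₀ → Prop} {m : ℕ} {α β : V₀ → Fin (m + 1)}

variable (A₀ α β) in
def cycleGlue : V₀ ⊕ Fin (m + 1) → V₀ ⊕ Fin (m + 1) → Prop
  | inl u, inl v => A₀ u v
  | inl u, inr j => j = α u
  | inr i, inl v => i = β v
  | inr i, inr j => j = i + 1

theorem reflTransGen_cycleGlue_inr (i j : Fin (m + 1)) :
    ReflTransGen (cycleGlue A₀ α β) (inr i) (inr j) := by
  have to_last (i : Fin (m + 1)) : ReflTransGen (cycleGlue A₀ α β) (inr i) (inr (Fin.last m)) := by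
    induction i using Fin.reverseInduction with
    | last => exact .refl
    | cast i ih => exact .head (b := inr i.succ) Fin.coeSucc_eq_succ.symm ih
  have of_zero (j : Fin (m + 1)) : ReflTransGen (cycleGlue A₀ α β) (inr 0) (inr j) := by
    induction j using Fin.induction with
    | zero => exact .refl
    | succ j ih => exact ih.tail Fin.coeSucc_eq_succ.symm
  exact (to_last i).trans (.head (b := inr 0) (Fin.last_add_one m).symm (of_zero j))

theorem strongConn_cycleGlue : StrongConn (cycleGlue A₀ α β) := by
  have to_cycle : ∀ z, ∃ i, ReflTransGen (cycleGlue A₀ α β) z (inr i)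
    | inl u => ⟨α u, .single (show cycleGlue A₀ α β (inl u) (inr (α u)) from rfl)⟩
    | inr i => ⟨i, .refl⟩
  have of_cycle : ∀ z, ∃ j, ReflTransGen (cycleGlue A₀ α β) (inr j) z
    | inl v => ⟨β v, .single (show cycleGlue A₀ α β (inr (β v)) (inl v) from rfl)⟩
    | inr j => ⟨j, .refl⟩
  intro x y
  obtain ⟨i, hi⟩ := to_cycle x
  obtain ⟨j, hj⟩ := of_cycle y
  exact exists_diPath_of_reflTransGen (hi.trans ((reflTransGen_cycleGlue_inr i j).trans hj))

theorem cycleGlue_out_inr_eq {j : Fin (m + 1)} (hj : j ∉ Set.range β) :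
    ∀ z, cycleGlue A₀ α β (inr j) z → z = inr (j + 1)
  | inl v, hv => absurd ⟨v, hv.symm⟩ hj
  | inr _, hi => congrArg inr hi

theorem cycleGlue_in_inr_eq {j : Fin (m + 1)} (hj : j ∉ Set.range α) :
    ∀ z, cycleGlue A₀ α β z (inr j) → z = inr (j - 1)
  | inl u, hu => absurd ⟨u, hu.symm⟩ hj
  | inr _, hi => congrArg inr (eq_sub_of_add_eq hi.symm)

theorem cycleGlue_out_inr_pair (hβ : β.Injective) (j : Fin (m + 1)) :
    ∃ a b, ∀ z, cycleGlue A₀ α β (inr j) z → z = a ∨ z = b := by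
  by_cases hj : j ∈ Set.range β
  · obtain ⟨v, rfl⟩ := hj
    refine ⟨inr (β v + 1), inl v, ?_⟩
    rintro (w | i) h
    · exact .inr (congrArg inl (hβ h).symm)
    · exact .inl (congrArg inr h)
  · exact ⟨inr (j + 1), inr (j + 1), fun z hz => .inl (cycleGlue_out_inr_eq hj z hz)⟩

theorem cycleGlue_in_inr_pair (hα : α.Injective) (j : Fin (m + 1)) :
    ∃ a b, ∀ z, cycleGlue A₀ α β z (inr j) → z = a ∨ z = b := by
  by_cases hj : j ∈ Set.range α
  · obtain ⟨u, rfl⟩ := hj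
    refine ⟨inr (α u - 1), inl u, ?_⟩
    rintro (w | i) h
    · exact .inr (congrArg inl (hα h).symm)
    · exact .inl (congrArg inr (eq_sub_of_add_eq h.symm))
  · exact ⟨inr (j - 1), inr (j - 1), fun z hz => .inl (cycleGlue_in_inr_eq hj z hz)⟩

theorem mem_range_of_intDisj_from_inr {j : Fin (m + 1)} {y : V₀ ⊕ Fin (m + 1)}
    {P Q : List (V₀ ⊕ Fin (m + 1))} (hP : DiPath (cycleGlue A₀ α β) (inr j) y P)
    (hQ : DiPath (cycleGlue A₀ α β) (inr j) y Q) (hP2 : 2 ≤ P.length) (hQ2 : 2 ≤ Q.length)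
    (hPQ : P ≠ Q) (hd : IntDisj P Q) : j ∈ Set.range β := by
  by_contra hj
  exact hPQ (hP.eq_of_intDisj_of_unique_out (cycleGlue_out_inr_eq hj) hQ hP2 hQ2 hd)

theorem mem_range_of_intDisj_to_inr {j : Fin (m + 1)} {x : V₀ ⊕ Fin (m + 1)}
    {P Q : List (V₀ ⊕ Fin (m + 1))} (hP : DiPath (cycleGlue A₀ α β) x (inr j) P)
    (hQ : DiPath (cycleGlue A₀ α β) x (inr j) Q) (hP2 : 2 ≤ P.length) (hQ2 : 2 ≤ Q.length)
    (hPQ : P ≠ Q) (hd : IntDisj P Q) : j ∈ Set.range α := by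
  by_contra hj
  exact hPQ (hP.eq_of_intDisj_of_unique_in (cycleGlue_in_inr_eq hj) hQ hP2 hQ2 hd)

variable {r : Fin (m + 1)}

theorem inr_mem_of_isChain_inr (hβ : ∀ v, r < β v) {y : V₀} :
    ∀ (t : List (V₀ ⊕ Fin (m + 1))) (c : Fin (m + 1)), c ≤ r →
      (inr c :: t).IsChain (cycleGlue A₀ α β) → (inr c :: t).getLast? = some (inl y) →
      inr r ∈ inr c :: t
  | [], _, _, _, hy => by simp at hy
  | b :: t, c, hc, hch, hy => by
    rcases hc.lt_or_eq with hc | rfl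
    · rw [List.isChain_cons_cons] at hch
      rw [List.getLast?_cons_cons] at hy
      rcases b with v | i
      · exact absurd (hch.1 ▸ hβ v) (lt_asymm hc)
      · obtain rfl : i = c + 1 := hch.1
        exact .tail _ (inr_mem_of_isChain_inr hβ t _ (Fin.add_one_le_of_lt hc) hch.2 hy)
    · exact List.mem_cons_self

theorem inr_mem_of_isChain_inl (hα : ∀ v, α v < r) (hβ : ∀ v, r < β v) {x y : V₀} :
    ∀ t : List (V₀ ⊕ Fin (m + 1)), (inl x :: t).IsChain (cycleGlue A₀ α β) →
      (inl x :: t).getLast? = some (inl y) → (∃ j, inr j ∈ t) → inr r ∈ t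
  | [], _, _, ⟨_, hj⟩ => by simp at hj
  | b :: t, hch, hy, ⟨j, hj⟩ => by
    rw [List.isChain_cons_cons] at hch
    rw [List.getLast?_cons_cons] at hy
    rcases b with u | i
    · exact .tail _ (inr_mem_of_isChain_inl hα hβ t hch.2 hy ⟨j, by simpa using hj⟩)
    · obtain rfl : i = α x := hch.1
      exact inr_mem_of_isChain_inr hβ t _ (hα x).le hch.2 hy

theorem inr_mem_internals (hα : ∀ v, α v < r) (hβ : ∀ v, r < β v) {x y : V₀} {j : Fin (m + 1)}
    {P : List (V₀ ⊕ Fin (m + 1))} (hP : DiPath (cycleGlue A₀ α β) (inl x) (inl y) P)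
    (hj : inr j ∈ P) : inr r ∈ internals P := by
  obtain ⟨t, rfl⟩ := hP.exists_eq_cons
  rw [hP.mem_internals_iff]
  exact ⟨.tail _ (inr_mem_of_isChain_inl hα hβ t hP.1 hP.2.2.2 ⟨j, by simpa using hj⟩),
    by simp, by simp⟩

theorem not_meets_cycle_and (hα : ∀ v, α v < r) (hβ : ∀ v, r < β v) {x y x' y' : V₀}
    {P Q : List (V₀ ⊕ Fin (m + 1))} (hP : DiPath (cycleGlue A₀ α β) (inl x) (inl y) P)
    (hQ : DiPath (cycleGlue A₀ α β) (inl x') (inl y') Q) (hd : IntDisj P Q) :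
    ¬((∃ i, inr i ∈ P) ∧ ∃ j, inr j ∈ Q) := fun ⟨⟨_, hi⟩, ⟨_, hj⟩⟩ =>
  hd.1 _ (inr_mem_internals hα hβ hP hi) (inr_mem_internals hα hβ hQ hj)

theorem meets_cycle_or (hA₀ : TwoSpindleFree A₀) {x y : V₀} {P Q : List (V₀ ⊕ Fin (m + 1))}
    (hP : DiPath (cycleGlue A₀ α β) (inl x) (inl y) P)
    (hQ : DiPath (cycleGlue A₀ α β) (inl x) (inl y) Q) (hd : IntDisj P Q) (hPQ : P ≠ Q) :
    (∃ i, inr i ∈ P) ∨ ∃ j, inr j ∈ Q := by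
  have mem_range {L : List (V₀ ⊕ Fin (m + 1))} (hL : ¬∃ j, inr j ∈ L) :
      ∀ z ∈ L, z ∈ Set.range inl
    | inl u, _ => ⟨u, rfl⟩
    | inr j, hj => absurd ⟨j, hj⟩ hL
  by_contra! h
  exact hPQ (hA₀.eq_of_forall_mem_range inl_injective (fun _ _ h => h) hP hQ hd
    (mem_range (not_exists.mpr h.1)) (mem_range (not_exists.mpr h.2)))

theorem not_spindle3_cycleGlue (hA₀ : TwoSpindleFree A₀) (hαi : α.Injective) (hβi : β.Injective)
    (hα : ∀ v, α v < r) (hβ : ∀ v, r < β v) : ¬Spindle3 (cycleGlue A₀ α β) := by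
  rintro ⟨x, y, P₁, P₂, P₃, h₁, h₂, h₃, l₁, l₂, l₃, n₁₂, n₁₃, n₂₃, d₁₂, d₁₃, d₂₃⟩
  have distinct : ¬(P₁ = P₂ ∨ P₁ = P₃ ∨ P₂ = P₃) := by tauto
  rcases y with y | j
  · rcases x with x | i
    · have e₁₂ := not_meets_cycle_and hα hβ h₁ h₂ d₁₂
      have e₁₃ := not_meets_cycle_and hα hβ h₁ h₃ d₁₃
      have e₂₃ := not_meets_cycle_and hα hβ h₂ h₃ d₂₃
      rcases meets_cycle_or hA₀ h₁ h₂ d₁₂ n₁₂ with c₁ | c₂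
      · rcases meets_cycle_or hA₀ h₂ h₃ d₂₃ n₂₃ with c₂ | c₃
        exacts [e₁₂ ⟨c₁, c₂⟩, e₁₃ ⟨c₁, c₃⟩]
      · rcases meets_cycle_or hA₀ h₁ h₃ d₁₃ n₁₃ with c₁ | c₃
        exacts [e₁₂ ⟨c₁, c₂⟩, e₂₃ ⟨c₂, c₃⟩]
    · obtain ⟨a, b, hab⟩ := cycleGlue_out_inr_pair (A₀ := A₀) (α := α) hβi i
      exact distinct (h₁.eq_or_eq_of_intDisj_of_two_out hab h₂ h₃ l₁ l₂ l₃ d₁₂ d₁₃ d₂₃)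
  · obtain ⟨a, b, hab⟩ := cycleGlue_in_inr_pair (A₀ := A₀) (β := β) hαi j
    exact distinct (h₁.eq_or_eq_of_intDisj_of_two_in hab h₂ h₃ l₁ l₂ l₃ d₁₂ d₁₃ d₂₃)

theorem not_bispindle22_cycleGlue (hA₀ : TwoSpindleFree A₀) (hα : ∀ v, α v < r)
    (hβ : ∀ v, r < β v) : ¬Bispindle22 (cycleGlue A₀ α β) := by
  rintro ⟨x, y, P₁, P₂, P₃, P₄, h₁, h₂, h₃, h₄, l₁, l₂, l₃, l₄, n₁₂, n₃₄,
    d₁₂, d₁₃, d₁₄, d₂₃, d₂₄, d₃₄⟩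
  have range_disjoint {j : Fin (m + 1)} (hjα : j ∈ Set.range α) (hjβ : j ∈ Set.range β) :
      False := by
    obtain ⟨u, rfl⟩ := hjα
    obtain ⟨v, hv⟩ := hjβ
    exact ((hα u).trans (hβ v)).ne hv.symm
  rcases x with x | i
  · rcases y with y | j
    · rcases meets_cycle_or hA₀ h₁ h₂ d₁₂ n₁₂ with c₁ | c₂ <;>
        rcases meets_cycle_or hA₀ h₃ h₄ d₃₄ n₃₄ with c₃ | c₄
      exacts [not_meets_cycle_and hα hβ h₁ h₃ d₁₃ ⟨c₁, c₃⟩,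
        not_meets_cycle_and hα hβ h₁ h₄ d₁₄ ⟨c₁, c₄⟩,
        not_meets_cycle_and hα hβ h₂ h₃ d₂₃ ⟨c₂, c₃⟩,
        not_meets_cycle_and hα hβ h₂ h₄ d₂₄ ⟨c₂, c₄⟩]
    · exact range_disjoint (mem_range_of_intDisj_to_inr h₁ h₂ l₁ l₂ n₁₂ d₁₂)
        (mem_range_of_intDisj_from_inr h₃ h₄ l₃ l₄ n₃₄ d₃₄)
  · exact range_disjoint (mem_range_of_intDisj_to_inr h₃ h₄ l₃ l₄ n₃₄ d₃₄)
      (mem_range_of_intDisj_from_inr h₁ h₂ l₁ l₂ n₁₂ d₁₂)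

theorem not_colorable_cycleGlue {k : ℕ} (hA₀ : ¬(SimpleGraph.fromRel A₀).Colorable k) :
    ¬(SimpleGraph.fromRel (cycleGlue A₀ α β)).Colorable k :=
  fun h => hA₀ (h.of_hom (fromRelHom inl_injective fun _ _ h => h))

end CycleGlue

/-- Theorem 8: for every `k` there is a strong digraph with chromatic number
greater than `k` containing no 3-spindle and no `(2+2)`-bispindle. -/
theorem stmt13 (k : ℕ) :
    ∃ (V : Type) (_ : Fintype V) (A : V → V → Prop),
      StrongConn A ∧ ¬ Spindle3 A ∧ ¬ Bispindle22 A ∧ (k : ℕ∞) < dchrom A := by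
  obtain ⟨V₀, _, A₀, hfree, hcol⟩ := exists_twoSpindleFree_not_colorable k
  set n := Fintype.card V₀
  let e := Fintype.equivFin V₀
  let r : Fin (2 * n + 1) := ⟨n, by omega⟩
  let α (v : V₀) : Fin (2 * n + 1) := ⟨e v, by omega⟩
  let β (v : V₀) : Fin (2 * n + 1) := ⟨n + 1 + e v, by omega⟩
  have hα (v : V₀) : α v < r := (e v).isLt
  have hβ (v : V₀) : r < β v := Fin.mk_lt_mk.mpr (by omega)
  have hαi : α.Injective := fun u v h => e.injective (Fin.ext (Fin.mk.inj_iff.mp h))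
  have hβi : β.Injective := fun u v h => e.injective (Fin.ext (by simpa [β] using h))
  refine ⟨V₀ ⊕ Fin (2 * n + 1), inferInstance, cycleGlue A₀ α β, strongConn_cycleGlue,
    not_spindle3_cycleGlue hfree hαi hβi hα hβ, not_bispindle22_cycleGlue hfree hα hβ, ?_⟩
  rw [dchrom, ← not_le, SimpleGraph.chromaticNumber_le_iff_colorable]
  exact not_colorable_cycleGlue hcol
end

section
/- Let D be a strongly connected digraph whose underlying graph has chromatic number at least 4. Then D contains a directed cycle C and a directed path P of length at least 2 whose endpoints lie on C and whose internal vertices do not lie on C, with P oriented from one vertex of C to another. -/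
/-!
Suppose a strong digraph `D` has no cycle with an ear of length at least 2; we 3-colour its
underlying graph by induction on the number of vertices. Every arc `u → w` lies on a cycle `C`
(close a `w → u` path). If `C` is spanning, then every arc of `D` joins consecutive vertices
of `C`: a chord `u → w` would make the `C`-path from `u` to `w` an ear of the cycle formed by
the chord and the `C`-path from `w` back to `u`. So `D` is a cycle, and cycles are 3-colourable.
Otherwise pick `m ∉ C`. A walk from `C` into `m` and on back to `C` that avoids `C` in between
must return where it started, or a path extracted from it would be an ear of `C`. Hence the
vertices off `C` that exit to a fixed `c ∈ C` are attached to the rest of `D` only through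
`c`: `c` is a cut vertex of the underlying graph, both sides of it are again strong, ear-free
and smaller, and their colourings can be glued at `c`.
-/

universe u

open List Relation

section Paths
variable {V : Type*} {R : V → V → Prop} {a b : V} {l : List V}

theorem DiPath.reflTransGen (h : DiPath R a b l) : ReflTransGen R a b := by
  obtain ⟨hc, -, hh, hl⟩ := h
  obtain ⟨t, rfl⟩ := head?_eq_some_iff.mp hh
  exact relationReflTransGen_of_exists_isChain_cons t hc
    (Option.some_injective _ (by rw [← getLast?_eq_some_getLast, hl]))

theorem StrongConn.reflTransGen (h : StrongConn R) (a b : V) : ReflTransGen R a b :=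
  let ⟨_, hl⟩ := h a b
  hl.reflTransGen

theorem exists_diPath_of_reflTransGen_s18 (h : ReflTransGen R a b) : ∃ l, DiPath R a b l := by
  induction h using ReflTransGen.head_induction_on with
  | refl => exact ⟨[b], .singleton b, nodup_singleton b, rfl, rfl⟩
  | @head a c hac _ ih =>
    obtain ⟨l, hc, hnd, hh, hl⟩ := ih
    by_cases ha : a ∈ l
    · obtain ⟨l₁, l₂, rfl⟩ := append_of_mem ha
      refine ⟨a :: l₂, hc.suffix (suffix_append _ _), hnd.sublist (sublist_append_right _ _),
        rfl, ?_⟩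
      rwa [getLast?_append_of_ne_nil _ (cons_ne_nil _ _)] at hl
    · obtain ⟨t, rfl⟩ := head?_eq_some_iff.mp hh
      exact ⟨a :: c :: t, hc.cons_cons hac, nodup_cons.2 ⟨ha, hnd⟩, rfl,
        by rw [getLast?_cons_cons, hl]⟩

variable {W : Type*} {S : W → W → Prop} {f : W → V}

theorem DiPath.map (hf : f.Injective) (hS : ∀ a b, S a b → R (f a) (f b)) {a b : W}
    {l : List W} (h : DiPath S a b l) : DiPath R (f a) (f b) (l.map f) := by
  obtain ⟨hc, hnd, hh, hl⟩ := h
  exact ⟨(isChain_map f).2 (hc.imp hS), hnd.map hf, by simp [hh], by simp [hl]⟩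

theorem DiCycle.map (hf : f.Injective) (hS : ∀ a b, S a b → R (f a) (f b)) {l : List W}
    (h : DiCycle S l) : DiCycle R (l.map f) := by
  obtain ⟨hne, hc, hnd, hcl⟩ := h
  refine ⟨by simpa using hne, (isChain_map f).2 (hc.imp hS), hnd.map hf, ?_⟩
  intro a b ha hb
  rw [getLast?_map, Option.map_eq_some_iff] at ha
  rw [head?_map, Option.map_eq_some_iff] at hb
  obtain ⟨a, ha, rfl⟩ := ha
  obtain ⟨b, hb, rfl⟩ := hb
  exact hS _ _ (hcl a b ha hb)

theorem internals_map_s18 (l : List W) : internals (l.map f) = (internals l).map f := by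
  simp [internals, map_dropLast, map_tail]

end Paths

section Ears
variable {V : Type*} {A : V → V → Prop}

def HasEar (A : V → V → Prop) : Prop :=
  ∃ (C P : List V) (x y : V), DiCycle A C ∧ x ∈ C ∧ y ∈ C ∧ DiPath A x y P ∧
    3 ≤ P.length ∧ ∀ v ∈ internals P, v ∉ C

theorem HasEar.map {W : Type*} {B : W → W → Prop} {f : W → V} (hf : f.Injective)
    (hB : ∀ a b, B a b → A (f a) (f b)) (h : HasEar B) : HasEar A := by
  obtain ⟨C, P, x, y, hC, hx, hy, hP, hlen, hint⟩ := h
  refine ⟨C.map f, P.map f, f x, f y, hC.map hf hB, mem_map_of_mem hx, mem_map_of_mem hy,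
    hP.map hf hB, by simpa using hlen, ?_⟩
  rw [internals_map_s18]
  rintro _ hv hvC
  obtain ⟨v, hv', rfl⟩ := mem_map.1 hv
  exact hint v hv' ((mem_map_of_injective hf).1 hvC)

theorem DiCycle.append_comm {l₁ l₂ : List V} (h : DiCycle A (l₁ ++ l₂)) :
    DiCycle A (l₂ ++ l₁) := by
  rcases eq_or_ne l₁ [] with rfl | h₁
  · simpa using h
  rcases eq_or_ne l₂ [] with rfl | h₂
  · simpa using h
  obtain ⟨-, hc, hnd, hcl⟩ := h
  obtain ⟨hc₁, hc₂, hc₁₂⟩ := isChain_append.1 hc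
  refine ⟨by simp [h₁], isChain_append.2 ⟨hc₂, hc₁, fun a ha b hb => ?_⟩,
    nodup_append_comm.1 hnd, fun a b ha hb => ?_⟩
  · exact hcl a b (by rwa [getLast?_append_of_ne_nil _ h₂])
      (by rwa [head?_append_of_ne_nil _ h₁])
  · rw [getLast?_append_of_ne_nil _ h₁] at ha
    rw [head?_append_of_ne_nil _ h₂] at hb
    exact hc₁₂ a ha b hb

theorem hasEar_of_chord {u w : V} {s q : List V} (hC : DiCycle A (u :: s ++ w :: q))
    (hs : s ≠ []) (huw : A u w) : HasEar A := by
  obtain ⟨-, hc, hnd, hcl⟩ := hC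
  have hsub : [u] ++ w :: q <+ u :: s ++ w :: q := ((nil_sublist s).cons_cons u).append (.refl _)
  have hZ : DiCycle A (w :: q ++ [u]) := by
    refine ⟨by simp, (isChain_append.2 ⟨hc.right_of_append, .singleton u, ?_⟩),
      nodup_append_comm.1 (hnd.sublist hsub), fun a b ha hb => ?_⟩
    · rintro a ha _ ⟨⟩
      exact hcl a u (by rwa [getLast?_append_of_ne_nil _ (cons_ne_nil _ _)]) rfl
    · rw [getLast?_concat, Option.some_inj] at ha
      rw [head?_append_of_ne_nil _ (cons_ne_nil _ _), head?_cons, Option.some_inj] at hb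
      exact ha ▸ hb ▸ huw
  have hP : u :: s ++ [w] <+: u :: s ++ w :: q := by simp
  refine ⟨w :: q ++ [u], u :: s ++ [w], u, w, hZ, by simp, by simp,
    ⟨hc.prefix hP, hnd.sublist hP.sublist, rfl, getLast?_concat⟩, ?_, ?_⟩
  · simpa [Nat.one_le_iff_ne_zero] using hs
  · have hint : internals (u :: s ++ [w]) = s := by simp [internals]
    rw [hint]
    intro v hv hvZ
    rw [cons_append, nodup_cons, nodup_append] at hnd
    rcases mem_append.1 hvZ with h | h
    · exact hnd.2.2.2 v hv v h rfl
    · rw [mem_singleton.1 h] at hv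
      exact hnd.1 (mem_append_left _ hv)

theorem DiCycle.consecutive_or_hasEar {C : List V} (hC : DiCycle A C) {u w : V} (hu : u ∈ C)
    (hw : w ∈ C) (huw : A u w) (hne : u ≠ w) :
    ([u, w] <:+: C ∨ C.getLast? = some u ∧ C.head? = some w) ∨ HasEar A := by
  obtain ⟨p, r, rfl⟩ := append_of_mem hu
  have hw' : w ∈ r ++ p := by
    simp only [mem_append, mem_cons] at hw ⊢
    tauto
  obtain ⟨s, q, hsq⟩ := append_of_mem hw'
  rcases s with _ | ⟨s₀, s⟩
  · left
    rcases r with _ | ⟨r₀, r⟩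
    · right
      simp only [nil_append] at hsq
      exact ⟨getLast?_concat, by simp [hsq]⟩
    · left
      obtain ⟨rfl, -⟩ := cons_eq_cons.1 hsq
      exact ⟨p, r, by simp⟩
  · right
    refine hasEar_of_chord (s := s₀ :: s) (q := q) ?_ (cons_ne_nil _ _) huw
    simpa [hsq] using (hC.append_comm : DiCycle A (u :: r ++ p))

theorem exists_diCycle_of_arc (hS : StrongConn A) {u w : V} (huw : A u w) :
    ∃ C, DiCycle A C ∧ u ∈ C ∧ w ∈ C := by
  obtain ⟨l, hc, hnd, hh, hl⟩ := hS w u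
  refine ⟨l, ⟨by rintro rfl; simp at hh, hc, hnd, fun a b ha hb => ?_⟩,
    mem_of_mem_getLast? hl, mem_of_mem_head? hh⟩
  rw [hl, Option.some_inj] at ha
  rw [hh, Option.some_inj] at hb
  exact ha ▸ hb ▸ huw

end Ears

section Attachments
variable {V : Type*} {A : V → V → Prop} {C : List V}

def offArc (A : V → V → Prop) (C : List V) (a b : V) : Prop := A a b ∧ a ∉ C ∧ b ∉ C

def IsEntry (A : V → V → Prop) (C : List V) (x m : V) : Prop :=
  x ∈ C ∧ m ∉ C ∧ ∃ m₀, A x m₀ ∧ ReflTransGen (offArc A C) m₀ m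

def IsExit (A : V → V → Prop) (C : List V) (m c : V) : Prop :=
  m ∉ C ∧ c ∈ C ∧ ∃ m₁, ReflTransGen (offArc A C) m m₁ ∧ A m₁ c

theorem notMem_iff_of_reflTransGen_offArc {a b : V} (h : ReflTransGen (offArc A C) a b) :
    a ∉ C ↔ b ∉ C := by
  rcases h.cases_head with rfl | ⟨_, ⟨-, ha, -⟩, -⟩
  · rfl
  rcases h.cases_tail with rfl | ⟨_, -, ⟨-, -, hb⟩⟩
  · rfl
  exact iff_of_true ha hb

theorem IsEntry.tail {x a b : V} (h : IsEntry A C x a) (hab : A a b) (hb : b ∉ C) :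
    IsEntry A C x b :=
  let ⟨hx, ha, m₀, hxm₀, hm₀a⟩ := h
  ⟨hx, hb, m₀, hxm₀, hm₀a.tail ⟨hab, ha, hb⟩⟩

theorem IsExit.head {a b c : V} (hab : A a b) (ha : a ∉ C) (h : IsExit A C b c) :
    IsExit A C a c :=
  let ⟨hb, hc, m₁, hbm₁, hm₁c⟩ := h
  ⟨ha, hc, m₁, hbm₁.head ⟨hab, ha, hb⟩, hm₁c⟩

theorem exists_isEntry (hS : StrongConn A) {c₀ m : V} (hc₀ : c₀ ∈ C) (hm : m ∉ C) :
    ∃ x, IsEntry A C x m := by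
  induction hS.reflTransGen c₀ m with
  | refl => exact absurd hc₀ hm
  | @tail b m _ hbm ih =>
    by_cases hb : b ∈ C
    · exact ⟨b, hb, hm, m, hbm, .refl⟩
    · exact (ih hb).imp fun x hx => hx.tail hbm hm

theorem exists_isExit (hS : StrongConn A) {c₀ m : V} (hc₀ : c₀ ∈ C) (hm : m ∉ C) :
    ∃ c, IsExit A C m c := by
  induction hS.reflTransGen m c₀ using ReflTransGen.head_induction_on with
  | refl => exact absurd hc₀ hm
  | @head m b hmb _ ih =>
    by_cases hb : b ∈ C
    · exact ⟨b, hm, hb, m, .refl, hmb⟩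
    · exact (ih hb).imp fun c hc => hc.head hmb hm

theorem IsEntry.eq_of_isExit (hNE : ¬HasEar A) (hC : DiCycle A C) {x m c : V}
    (hx : IsEntry A C x m) (hc : IsExit A C m c) : x = c := by
  by_contra hxc
  obtain ⟨hxC, hm, m₀, hxm₀, hm₀m⟩ := hx
  obtain ⟨-, hcC, m₁, hmm₁, hm₁c⟩ := hc
  obtain ⟨l, hl, hnd, hh, hlast⟩ := exists_diPath_of_reflTransGen_s18 (hm₀m.trans hmm₁)
  have hne : l ≠ [] := by rintro rfl; simp at hh
  have hm₀ : m₀ ∉ C := (notMem_iff_of_reflTransGen_offArc hm₀m).2 hm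
  have hoff : ∀ v ∈ l, v ∉ C := (hl : l.IsChain (offArc A C)).induction _ _
    (fun _ _ h _ => h.2.2) fun hne => (head_eq_iff_head?_eq_some hne).2 hh ▸ hm₀
  have hchain : (x :: l).IsChain A :=
    (hl.imp fun _ _ h => h.1).cons fun y hy => (Option.some_inj.1 (hh.symm.trans hy)) ▸ hxm₀
  apply hNE
  refine ⟨C, x :: l ++ [c], x, c, hC, hxC, hcC, ⟨?_, ?_, rfl, getLast?_concat⟩, ?_, ?_⟩
  · refine isChain_append.2 ⟨hchain, .singleton c, fun a ha b hb => ?_⟩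
    rw [getLast?_cons_of_ne_nil hne, hlast, Option.mem_some_iff] at ha
    rw [head?_cons, Option.mem_some_iff] at hb
    exact ha ▸ hb ▸ hm₁c
  · rw [cons_append, nodup_cons, nodup_append, mem_append, mem_singleton, not_or]
    refine ⟨⟨fun h => hoff x h hxC, hxc⟩, hnd, nodup_singleton c, fun a ha b hb => ?_⟩
    rintro rfl
    exact hoff a ha (mem_singleton.1 hb ▸ hcC)
  · simpa [Nat.one_le_iff_ne_zero] using hne
  · simpa [internals] using hoff

theorem IsExit.unique (hNE : ¬HasEar A) (hS : StrongConn A) (hC : DiCycle A C) {m c c' : V}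
    (h : IsExit A C m c) (h' : IsExit A C m c') : c = c' := by
  obtain ⟨x, hx⟩ := exists_isEntry hS h.2.1 h.1
  exact (hx.eq_of_isExit hNE hC h).symm.trans (hx.eq_of_isExit hNE hC h')

theorem IsExit.eq_or_isExit_of_arc_out (hNE : ¬HasEar A) (hS : StrongConn A) (hC : DiCycle A C)
    {a b c : V} (h : IsExit A C a c) (hab : A a b) : b = c ∨ IsExit A C b c := by
  by_cases hb : b ∈ C
  · exact .inl ((IsExit.unique hNE hS hC ⟨h.1, hb, a, .refl, hab⟩ h))
  obtain ⟨x, hx⟩ := exists_isEntry hS h.2.1 h.1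
  obtain ⟨c', hc'⟩ := exists_isExit hS h.2.1 hb
  obtain rfl := hx.eq_of_isExit hNE hC h
  obtain rfl := (hx.tail hab hb).eq_of_isExit hNE hC hc'
  exact .inr hc'

theorem IsExit.eq_or_isExit_of_arc_in (hNE : ¬HasEar A) (hC : DiCycle A C) {a b c : V}
    (h : IsExit A C b c) (hab : A a b) : a = c ∨ IsExit A C a c := by
  by_cases ha : a ∈ C
  · exact .inl (IsEntry.eq_of_isExit hNE hC ⟨ha, h.1, b, hab, .refl⟩ h)
  · exact .inr (h.head hab ha)

end Attachments

namespace SimpleGraph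
variable {V : Type*} {G : SimpleGraph V} {S : Set V} {x : V}

def LeavesThrough (G : SimpleGraph V) (S : Set V) (x : V) : Prop :=
  ∀ ⦃a b⦄, G.Adj a b → a ∈ S → b ∉ S → a = x

theorem LeavesThrough.insert_compl (h : G.LeavesThrough S x) :
    G.LeavesThrough (insert x Sᶜ) x := by
  rintro a b hab (rfl | ha) hb
  · rfl
  · rw [Set.mem_insert_iff, Set.mem_compl_iff, not_or, not_not] at hb
    exact absurd (h hab.symm hb.2 ha) hb.1

theorem LeavesThrough.colorable {n : ℕ} (h : G.LeavesThrough S x) (hx : x ∈ S)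
    (h₁ : (G.induce S).Colorable n) (h₂ : (G.induce (insert x Sᶜ)).Colorable n) :
    G.Colorable n := by
  classical
  obtain ⟨c₁⟩ := h₁
  obtain ⟨c₂⟩ := h₂
  have hmem₂ : ∀ {v}, v ∉ S → v ∈ insert x Sᶜ := fun hv => Set.mem_insert_of_mem _ hv
  let σ := Equiv.swap (c₂ ⟨x, Set.mem_insert _ _⟩) (c₁ ⟨x, hx⟩)
  let c : V → Fin n := fun v =>
    if hv : v ∈ S then σ (c₁ ⟨v, hv⟩) else c₂ ⟨v, hmem₂ hv⟩
  have mixed : ∀ {u v}, G.Adj u v → u ∈ S → v ∉ S → c u ≠ c v := by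
    intro u v huv hu hv
    obtain rfl := h huv hu hv
    simp only [c, dif_pos hu, dif_neg hv, σ, Equiv.swap_apply_right]
    exact c₂.valid
      (show (G.induce _).Adj ⟨u, Set.mem_insert _ _⟩ ⟨v, hmem₂ hv⟩ from huv)
  refine ⟨Coloring.mk c fun {u v} huv => ?_⟩
  by_cases hu : u ∈ S <;> by_cases hv : v ∈ S
  · simp only [c, dif_pos hu, dif_pos hv, σ.injective.ne_iff]
    exact c₁.valid (show (G.induce S).Adj ⟨u, hu⟩ ⟨v, hv⟩ from huv)
  · exact mixed huv hu hv
  · exact (mixed huv.symm hv hu).symm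
  · simp only [c, dif_neg hu, dif_neg hv]
    exact c₂.valid (show (G.induce _).Adj ⟨u, hmem₂ hu⟩ ⟨v, hmem₂ hv⟩ from huv)

end SimpleGraph

open SimpleGraph

section Separation
variable {V : Type*} {A : V → V → Prop}

theorem fromRel_restrict_eq_induce (A : V → V → Prop) (S : Set V) :
    fromRel (fun a b : S => A a b) = (fromRel A).induce S := by
  ext a b
  simp [Subtype.ext_iff]

theorem StrongConn.restrict (hS : StrongConn A) {S : Set V} {x : V} (hx : x ∈ S)
    (hsep : (fromRel A).LeavesThrough S x) : StrongConn (fun a b : S => A a b) := by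
  intro u w
  -- a walk that leaves `S` has to do so through `x`, and has to come back through `x`
  suffices key : ∀ v, ReflTransGen A u v →
      (∀ hv : v ∈ S, ReflTransGen (fun a b : S => A a b) u ⟨v, hv⟩) ∧
      (v ∉ S → ReflTransGen (fun a b : S => A a b) u ⟨x, hx⟩) from
    exists_diPath_of_reflTransGen_s18 ((key w (hS.reflTransGen u w)).1 w.2)
  intro v hv
  induction hv with
  | refl => exact ⟨fun _ => .refl, fun h => absurd u.2 h⟩
  | @tail b c _ hbc ih =>
    have leave : ∀ {a d}, A a d ∨ A d a → a ∈ S → d ∉ S → a = x := fun had ha hd =>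
      hsep ((fromRel_adj _ _ _).2 ⟨by rintro rfl; exact hd ha, had⟩) ha hd
    by_cases hb : b ∈ S <;> by_cases hc : c ∈ S
    · exact ⟨fun _ => (ih.1 hb).tail hbc, fun h => absurd hc h⟩
    · obtain rfl := leave (.inl hbc) hb hc
      exact ⟨fun h => absurd h hc, fun _ => ih.1 hb⟩
    · obtain rfl := leave (.inr hbc) hc hb
      exact ⟨fun _ => ih.2 hb, fun h => absurd hc h⟩
    · exact ⟨fun h => absurd h hc, fun _ => ih.2 hb⟩

theorem leavesThrough_compl_setOf_isExit (hNE : ¬HasEar A) (hS : StrongConn A) {C : List V}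
    (hC : DiCycle A C) (c : V) : (fromRel A).LeavesThrough {v | IsExit A C v c}ᶜ c := by
  intro a b hab ha hb
  replace hb : IsExit A C b c := not_not.1 hb
  rcases ((fromRel_adj _ _ _).1 hab).2 with h | h
  · exact (hb.eq_or_isExit_of_arc_in hNE hC h).resolve_right ha
  · exact (hb.eq_or_isExit_of_arc_out hNE hS hC h).resolve_right ha

end Separation

section Coloring
variable {V : Type*} {A : V → V → Prop}

theorem colorable_three_of_arcs_consecutive {C : List V} (hnd : C.Nodup) (hmem : ∀ v, v ∈ C)
    (h : ∀ u w, A u w → u ≠ w →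
      [u, w] <:+: C ∨ C.getLast? = some u ∧ C.head? = some w) :
    (fromRel A).Colorable 3 := by
  classical
  have hidx : ∀ u w, A u w → u ≠ w →
      C.idxOf w = C.idxOf u + 1 ∨ C.idxOf u + 1 = C.length ∧ C.idxOf w = 0 := by
    intro u w huw hne
    rcases h u w huw hne with ⟨s, t, rfl⟩ | ⟨hu, hw⟩
    · left
      have hs : u ∉ s ∧ w ∉ s := by
        rw [append_assoc, nodup_append] at hnd
        exact ⟨fun h => hnd.2.2 u h u (by simp) rfl, fun h => hnd.2.2 w h w (by simp) rfl⟩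
      simp [idxOf_append_of_notMem, hs.1, hs.2, idxOf_cons_ne _ hne]
    · right
      obtain ⟨C', rfl⟩ := getLast?_eq_some_iff.1 hu
      obtain ⟨t, ht⟩ := head?_eq_some_iff.1 hw
      have hu' : u ∉ C' := fun h => (nodup_append.1 hnd).2.2 u h u (mem_singleton_self u) rfl
      exact ⟨by simp [idxOf_append_of_notMem hu'], by rw [ht, idxOf_cons_self]⟩
  let f : V → Fin 3 := fun v =>
    if C.idxOf v + 1 = C.length then 2 else ⟨C.idxOf v % 2, by omega⟩
  suffices key : ∀ u w, A u w → u ≠ w → f u ≠ f w from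
    ⟨Coloring.mk f fun huw => by
      obtain ⟨hne, h | h⟩ := (fromRel_adj _ _ _).1 huw
      exacts [key _ _ h hne, (key _ _ h hne.symm).symm]⟩
  intro u w huw hne
  have hu := idxOf_lt_length_of_mem (hmem u)
  have hw := idxOf_lt_length_of_mem (hmem w)
  have hinj : C.idxOf u ≠ C.idxOf w := fun h => hne ((idxOf_inj (hmem u)).1 h)
  rcases hidx u w huw hne with h | h <;> simp only [f] <;> split_ifs <;>
    simp [Fin.ext_iff] <;> omega

end Coloring

theorem colorable_three_of_not_hasEar {V : Type u} [Finite V] {A : V → V → Prop}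
    (hS : StrongConn A) (hNE : ¬HasEar A) : (fromRel A).Colorable 3 := by
  induction hn : Nat.card V using Nat.strong_induction_on generalizing V with
  | _ n ih =>
  by_cases harc : ∃ u w, A u w ∧ u ≠ w
  swap
  · refine ⟨Coloring.mk (fun _ => 0) fun {u w} huw => ?_⟩
    obtain ⟨hne, h | h⟩ := (fromRel_adj _ _ _).1 huw
    exacts [absurd ⟨u, w, h, hne⟩ harc, absurd ⟨w, u, h, hne.symm⟩ harc]
  obtain ⟨u, w, huw, hne⟩ := harc
  obtain ⟨C, hC, hu, hw⟩ := exists_diCycle_of_arc hS huw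
  by_cases hham : ∀ v, v ∈ C
  · exact colorable_three_of_arcs_consecutive hC.2.2.1 hham fun a b hab hab' =>
      (hC.consecutive_or_hasEar (hham a) (hham b) hab hab').resolve_right hNE
  obtain ⟨m, hm⟩ := not_forall.1 hham
  obtain ⟨c, hmc⟩ := exists_isExit hS hu hm
  obtain ⟨c', hc'C, hc'c⟩ : ∃ c' ∈ C, c' ≠ c := by
    by_cases huc : u = c
    exacts [⟨w, hw, huc ▸ hne.symm⟩, ⟨u, hu, huc⟩]
  have hside : ∀ S : Set V, c ∈ S → (fromRel A).LeavesThrough S c → ∀ v ∉ S,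
      ((fromRel A).induce S).Colorable 3 := fun S hcS hsep v hv => by
    rw [← fromRel_restrict_eq_induce]
    exact ih _ (hn ▸ Finite.card_subtype_lt hv) (hS.restrict hcS hsep)
      (fun h => hNE (h.map Subtype.val_injective fun _ _ => id)) rfl
  have hsep := leavesThrough_compl_setOf_isExit hNE hS hC c
  have hcU : c ∉ {v | IsExit A C v c} := fun h => h.1 hmc.2.1
  refine hsep.colorable hcU (hside _ hcU hsep m (not_not.2 hmc))
    (hside _ (Set.mem_insert _ _) hsep.insert_compl c' ?_)
  simp only [compl_compl, Set.mem_insert_iff, not_or]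
  exact ⟨hc'c, fun h => h.1 hc'C⟩

/-- Every strong digraph with chromatic number at least 4 contains a directed cycle
`C` together with a directed ear of length at least 2: a dipath between two vertices
of `C` whose internal vertices avoid `C`. -/
theorem stmt18 {V : Type u} [Fintype V] (A : V → V → Prop)
    (hstrong : StrongConn A) (hchi : (4 : ℕ∞) ≤ dchrom A) :
    ∃ (C P : List V) (x y : V), DiCycle A C ∧ x ∈ C ∧ y ∈ C ∧ DiPath A x y P ∧
      3 ≤ P.length ∧ ∀ v ∈ internals P, v ∉ C := by
  by_contra hNE
  have h3 := (colorable_three_of_not_hasEar hstrong hNE).chromaticNumber_le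
  have : (4 : ℕ∞) ≤ 3 := hchi.trans h3
  norm_num at this
end
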